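/- With [m]_q = (1-q^m)/(1-q), for every positive integer n: ∑_{j=0}^{2n} q^{8n-4j} · [(2n-1)^2 + 8j]_q = [2n+1]_q · [2n+1]_{q^4} · [2n+1]_{q^{2n+1}}, where [2n+1]_{q^4} = (1-q^{4(2n+1)})/(1-q^4) and [2n+1]_{q^{2n+1}} = (1-q^{(2n+1)^2})/(1-q^{2n+1}). -/

import Mathlib

/-!
Since `(8n - 4j) + ((2n - 1)² + 8j) = (2n + 1)² + 4j`, the `j`-th summand times `1 - q` is
`q^{4(2n-j)} - q^{(2n+1)²} q^{4j}`. Reflecting `j ↦ 2n - j` in the first part, the left side is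
`(1 - q^{(2n+1)²}) / (1 - q)` times `∑_{j ≤ 2n} q^{4j} = [2n+1]_{q^4}`, and on the right
`[2n+1]_q` cancels against the denominator of `[2n+1]_{q^{2n+1}}`.
-/

open Finset

section CommRing

variable {R : Type*} [CommRing R]

theorem pow_mul_one_sub_pow_eq_sub (q : R) {n j : ℕ} (hn : 0 < n) (hj : j ≤ 2 * n) :
    q ^ (8 * n - 4 * j) * (1 - q ^ ((2 * n - 1) ^ 2 + 8 * j)) =
      (q ^ 4) ^ (2 * n - j) - q ^ ((2 * n + 1) ^ 2) * (q ^ 4) ^ j := by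
  have hexp : 8 * n - 4 * j + ((2 * n - 1) ^ 2 + 8 * j) = (2 * n + 1) ^ 2 + 4 * j := by
    zify [show 4 * j ≤ 8 * n by omega, show 1 ≤ 2 * n by omega]
    ring
  rw [mul_one_sub, ← pow_add, hexp, pow_add, ← pow_mul, ← pow_mul, Nat.mul_sub]
  ring_nf

theorem sum_pow_mul_one_sub_pow (q : R) {n : ℕ} (hn : 0 < n) :
    ∑ j ∈ range (2 * n + 1), q ^ (8 * n - 4 * j) * (1 - q ^ ((2 * n - 1) ^ 2 + 8 * j)) =
      (1 - q ^ ((2 * n + 1) ^ 2)) * ∑ j ∈ range (2 * n + 1), (q ^ 4) ^ j := by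
  have hreflect : ∑ j ∈ range (2 * n + 1), (q ^ 4) ^ (2 * n - j) =
      ∑ j ∈ range (2 * n + 1), (q ^ 4) ^ j :=
    sum_range_reflect (fun j ↦ (q ^ 4) ^ j) (2 * n + 1)
  rw [sum_congr rfl fun j hj ↦
      pow_mul_one_sub_pow_eq_sub q hn (Nat.lt_succ_iff.1 (mem_range.1 hj)),
    sum_sub_distrib, hreflect, ← mul_sum]
  ring

end CommRing

theorem geom_sum_range_eq_one_sub_div {K : Type*} [DivisionRing K] {x : K} (hx : x ≠ 1) (m : ℕ) :
    ∑ i ∈ range m, x ^ i = (1 - x ^ m) / (1 - x) := by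
  simpa using geom_sum_Ico' hx (Nat.zero_le m)

theorem q_theorem_5_general (q : ℝ) (hq' : q ≠ -1) (n : ℕ) (hn : 0 < n)
    (hqn : q ^ (2 * n + 1) ≠ 1) :
    ∑ j ∈ Finset.range (2 * n + 1),
        q ^ (8 * n - 4 * j) * ((1 - q ^ ((2 * n - 1) ^ 2 + 8 * j)) / (1 - q)) =
      ((1 - q ^ (2 * n + 1)) / (1 - q)) * ((1 - q ^ (4 * (2 * n + 1))) / (1 - q ^ 4)) *
        ((1 - q ^ ((2 * n + 1) ^ 2)) / (1 - q ^ (2 * n + 1))) := by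
  have hq : q ≠ 1 := by
    rintro rfl
    simp at hqn
  have hq4 : q ^ 4 ≠ 1 := by
    rw [Ne, pow_eq_one_iff_of_ne_zero four_ne_zero]
    tauto
  have hN : 1 - q ^ (2 * n + 1) ≠ 0 := sub_ne_zero.2 hqn.symm
  have hlhs : ∑ j ∈ range (2 * n + 1),
        q ^ (8 * n - 4 * j) * ((1 - q ^ ((2 * n - 1) ^ 2 + 8 * j)) / (1 - q)) =
      (1 - q ^ ((2 * n + 1) ^ 2)) * (∑ j ∈ range (2 * n + 1), (q ^ 4) ^ j) / (1 - q) := by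
    simp_rw [← mul_div_assoc, ← sum_div, sum_pow_mul_one_sub_pow q hn]
  rw [hlhs, pow_mul q 4, ← geom_sum_range_eq_one_sub_div hq4]
  field_simp

theorem q_theorem_5 (q : ℝ) (hq : q ≠ 1) (hq' : q ≠ -1) (n : ℕ) (hn : 0 < n)
    (hqn : q ^ (2 * n + 1) ≠ 1) :
    ∑ j ∈ Finset.range (2 * n + 1),
        q ^ (8 * n - 4 * j) * ((1 - q ^ ((2 * n - 1) ^ 2 + 8 * j)) / (1 - q)) =
      ((1 - q ^ (2 * n + 1)) / (1 - q)) * ((1 - q ^ (4 * (2 * n + 1))) / (1 - q ^ 4)) *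
        ((1 - q ^ ((2 * n + 1) ^ 2)) / (1 - q ^ (2 * n + 1))) :=
  q_theorem_5_general q hq' n hn hqn
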